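/- The dual functional h is strongly convex with modulus μ, where μ > 0 is the smallest eigenvalue of C: the function W ↦ h(W) − (μ/2)‖W‖² is convex on ℝ^n. In particular, h has a unique global minimizer. -/

import Mathlib

open scoped RealInnerProductSpace

/-- The Lagrangian `L(V, W) = ½⟨AV, V⟩ − ⟨F, V⟩ + ⟨BV − G, W⟩ − ½⟨CW, W⟩`. -/
noncomputable def Lag {m n : ℕ}
    (A : EuclideanSpace ℝ (Fin m) →L[ℝ] EuclideanSpace ℝ (Fin m))
    (B : EuclideanSpace ℝ (Fin m) →L[ℝ] EuclideanSpace ℝ (Fin n))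
    (C : EuclideanSpace ℝ (Fin n) →L[ℝ] EuclideanSpace ℝ (Fin n))
    (F : EuclideanSpace ℝ (Fin m)) (G : EuclideanSpace ℝ (Fin n))
    (V : EuclideanSpace ℝ (Fin m)) (W : EuclideanSpace ℝ (Fin n)) : ℝ :=
  (1 / 2 : ℝ) * ⟪A V, V⟫ - ⟪F, V⟫ + ⟪B V - G, W⟫ - (1 / 2 : ℝ) * ⟪C W, W⟫

/-- The dual functional `h(W) = −inf_{V ∈ K} L(V, W)`. -/
noncomputable def dualFunctional {m n : ℕ}
    (A : EuclideanSpace ℝ (Fin m) →L[ℝ] EuclideanSpace ℝ (Fin m))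
    (B : EuclideanSpace ℝ (Fin m) →L[ℝ] EuclideanSpace ℝ (Fin n))
    (C : EuclideanSpace ℝ (Fin n) →L[ℝ] EuclideanSpace ℝ (Fin n))
    (F : EuclideanSpace ℝ (Fin m)) (G : EuclideanSpace ℝ (Fin n))
    (K : Set (EuclideanSpace ℝ (Fin m)))
    (W : EuclideanSpace ℝ (Fin n)) : ℝ :=
  -sInf ((fun V => Lag A B C F G V W) '' K)

/-! For fixed `V`, `W ↦ L(V, W)` is an affine function minus `½⟨CW, W⟩`, hence `μ`-strongly
concave because `C ≥ μ`. A pointwise infimum of `μ`-strongly concave functions is again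
`μ`-strongly concave, so `h = -inf_{V ∈ K} L(V, ·)` is `μ`-strongly convex; the infimum is
finite since `A`, being positive definite on a finite-dimensional space, is coercive.
Moreover `h ≥ -L(V₀, ·)` for any `V₀ ∈ K`, which grows quadratically, so the continuous
function `h` attains its minimum, and strict convexity makes the minimizer unique. -/

open Set Filter

section Quadratic

variable {E : Type*} [NormedAddCommGroup E] [InnerProductSpace ℝ E]

theorem inner_map_self_add_smul (T : E →L[ℝ] E) (x y : E) {a b : ℝ} (hab : a + b = 1) :
    ⟪T (a • x + b • y), a • x + b • y⟫ =
      a * ⟪T x, x⟫ + b * ⟪T y, y⟫ - a * b * ⟪T (x - y), x - y⟫ := by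
  obtain rfl : b = 1 - a := by linarith
  simp only [map_add, map_smul, map_sub, inner_add_left, inner_add_right, inner_sub_left,
    inner_sub_right, real_inner_smul_left, real_inner_smul_right]
  ring

theorem strongConvexOn_half_inner_map_self {T : E →L[ℝ] E} {μ : ℝ}
    (hT : ∀ x, μ * ‖x‖ ^ 2 ≤ ⟪T x, x⟫) :
    StrongConvexOn univ μ (fun x => (1 / 2 : ℝ) * ⟪T x, x⟫) := by
  refine ⟨convex_univ, fun x _ y _ a b ha hb hab => ?_⟩
  have hxy := mul_le_mul_of_nonneg_left (hT (x - y)) (mul_nonneg ha hb)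
  simp only [smul_eq_mul, inner_map_self_add_smul T x y hab]
  linarith

theorem inner_le_mul_norm_sq_add {α : ℝ} (hα : 0 < α) (u x : E) :
    ⟪u, x⟫ ≤ α / 2 * ‖x‖ ^ 2 + ‖u‖ ^ 2 / (2 * α) := by
  have hsq : 0 ≤ (α * ‖x‖ - ‖u‖) ^ 2 / (2 * α) := by positivity
  have hexp : (α * ‖x‖ - ‖u‖) ^ 2 / (2 * α) =
      α / 2 * ‖x‖ ^ 2 + ‖u‖ ^ 2 / (2 * α) - ‖u‖ * ‖x‖ := by
    field_simp
    ring
  linarith [real_inner_le_norm u x]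

theorem neg_sq_div_le_half_inner_map_self_sub_inner {T : E →L[ℝ] E} {α : ℝ} (hα : 0 < α)
    (hT : ∀ x, α * ‖x‖ ^ 2 ≤ ⟪T x, x⟫) (u x : E) :
    -(‖u‖ ^ 2 / (2 * α)) ≤ (1 / 2 : ℝ) * ⟪T x, x⟫ - ⟪u, x⟫ := by
  linarith [hT x, inner_le_mul_norm_sq_add hα u x]

theorem tendsto_half_inner_map_self_sub_inner_cocompact [ProperSpace E] {T : E →L[ℝ] E} {μ : ℝ}
    (hμ : 0 < μ) (hT : ∀ x, μ * ‖x‖ ^ 2 ≤ ⟪T x, x⟫) (u : E) :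
    Tendsto (fun x => (1 / 2 : ℝ) * ⟪T x, x⟫ - ⟪u, x⟫) (cocompact E) atTop := by
  have hlower : ∀ x, μ / 4 * ‖x‖ ^ 2 - ‖u‖ ^ 2 / μ ≤ (1 / 2 : ℝ) * ⟪T x, x⟫ - ⟪u, x⟫ := by
    intro x
    have hinner := inner_le_mul_norm_sq_add (half_pos hμ) u x
    rw [show 2 * (μ / 2) = μ by ring] at hinner
    linarith [hT x]
  have hquad : Tendsto (fun t : ℝ => μ / 4 * t ^ 2 - ‖u‖ ^ 2 / μ) atTop atTop :=
    tendsto_atTop_add_const_right _ _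
      ((tendsto_pow_atTop two_ne_zero).const_mul_atTop (by positivity))
  exact tendsto_atTop_mono hlower (hquad.comp tendsto_norm_cocompact_atTop)

theorem exists_pos_mul_norm_sq_le_inner_map_self [FiniteDimensional ℝ E] {T : E →L[ℝ] E}
    (hT : ∀ x, x ≠ 0 → 0 < ⟪T x, x⟫) : ∃ α > 0, ∀ x, α * ‖x‖ ^ 2 ≤ ⟪T x, x⟫ := by
  rcases subsingleton_or_nontrivial E with hE | hE
  · exact ⟨1, one_pos, fun x => by simp [Subsingleton.elim x 0]⟩
  obtain ⟨x₀, hx₀, hmin⟩ := (isCompact_sphere (0 : E) 1).exists_isMinOn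
    ((NormedSpace.sphere_nonempty (E := E)).2 zero_le_one)
    (T.continuous.inner (𝕜 := ℝ) continuous_id).continuousOn
  have hx₀ : ‖x₀‖ = 1 := by simpa using hx₀
  refine ⟨⟪T x₀, x₀⟫, hT x₀ (norm_ne_zero_iff.1 (by simp [hx₀])), fun x => ?_⟩
  rcases eq_or_ne x 0 with rfl | hx
  · simp
  have hnx : ‖x‖ ≠ 0 := norm_ne_zero_iff.2 hx
  have hsphere : ‖x‖⁻¹ • x ∈ Metric.sphere (0 : E) 1 := by
    simp [norm_smul, hnx]
  have hle : ⟪T x₀, x₀⟫ ≤ ‖x‖⁻¹ * (‖x‖⁻¹ * ⟪T x, x⟫) := by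
    simpa only [mem_ofPred_eq, id, map_smul, real_inner_smul_left, real_inner_smul_right]
      using hmin hsphere
  calc ⟪T x₀, x₀⟫ * ‖x‖ ^ 2 ≤ ‖x‖⁻¹ * (‖x‖⁻¹ * ⟪T x, x⟫) * ‖x‖ ^ 2 := by gcongr
    _ = ⟪T x, x⟫ := by field_simp

end Quadratic

section Infimum

variable {ι E : Type*} [NormedAddCommGroup E] [NormedSpace ℝ E]

theorem UniformConcaveOn.csInf_image {s : Set E} {φ : ℝ → ℝ} {f : ι → E → ℝ} {K : Set ι}
    (hK : K.Nonempty) (hbdd : ∀ x ∈ s, BddBelow ((f · x) '' K))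
    (hf : ∀ i ∈ K, UniformConcaveOn s φ (f i)) :
    UniformConcaveOn s φ (fun x => sInf ((f · x) '' K)) := by
  refine ⟨(hf _ hK.some_mem).1, fun x hx y hy a b ha hb hab => ?_⟩
  refine le_csInf (hK.image _) ?_
  rintro _ ⟨i, hi, rfl⟩
  have hxi := mul_le_mul_of_nonneg_left (csInf_le (hbdd x hx) ⟨i, hi, rfl⟩) ha
  have hyi := mul_le_mul_of_nonneg_left (csInf_le (hbdd y hy) ⟨i, hi, rfl⟩) hb
  have := (hf i hi).2 hx hy ha hb hab
  simp only [smul_eq_mul] at this ⊢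
  linarith

end Infimum

section Minimizer

variable {E : Type*} [NormedAddCommGroup E] [InnerProductSpace ℝ E] [FiniteDimensional ℝ E]

theorem StrongConvexOn.existsUnique_forall_le {f : E → ℝ} {μ : ℝ} (hf : StrongConvexOn univ μ f)
    (hμ : 0 < μ) (hcoer : Tendsto f (cocompact E) atTop) : ∃! x, ∀ y, f x ≤ f y := by
  have hstrict := hf.strictConvexOn hμ
  obtain ⟨x, hx⟩ := hstrict.convexOn.locallyLipschitz.continuous.exists_forall_le hcoer
  refine ⟨x, hx, fun y hy => ?_⟩
  exact hstrict.eq_of_isMinOn (fun z _ => hy z) (fun z _ => hx z) (mem_univ y) (mem_univ x)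

end Minimizer

section Lagrangian

variable {m n : ℕ}
  (A : EuclideanSpace ℝ (Fin m) →L[ℝ] EuclideanSpace ℝ (Fin m))
  (B : EuclideanSpace ℝ (Fin m) →L[ℝ] EuclideanSpace ℝ (Fin n))
  (C : EuclideanSpace ℝ (Fin n) →L[ℝ] EuclideanSpace ℝ (Fin n))
  (F : EuclideanSpace ℝ (Fin m)) (G : EuclideanSpace ℝ (Fin n))

theorem Lag_eq_half_inner_map_self_sub (V : EuclideanSpace ℝ (Fin m))
    (W : EuclideanSpace ℝ (Fin n)) :
    Lag A B C F G V W = ((1 / 2 : ℝ) * ⟪A V, V⟫ - ⟪F - B.adjoint W, V⟫)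
      - (⟪G, W⟫ + (1 / 2 : ℝ) * ⟪C W, W⟫) := by
  rw [Lag, inner_sub_left, inner_sub_left, ContinuousLinearMap.adjoint_inner_left,
    real_inner_comm (B V)]
  ring

theorem strongConcaveOn_Lag {μ : ℝ} (hC : ∀ W, μ * ‖W‖ ^ 2 ≤ ⟪C W, W⟫)
    (V : EuclideanSpace ℝ (Fin m)) : StrongConcaveOn univ μ (Lag A B C F G V) := by
  have haffine : ConcaveOn ℝ univ (fun W => (1 / 2 : ℝ) * ⟪A V, V⟫ - ⟪F, V⟫ + ⟪B V - G, W⟫) :=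
    (concaveOn_const _ convex_univ).add ((innerSL ℝ (B V - G)).toLinearMap.concaveOn convex_univ)
  have h := (uniformConcaveOn_zero.2 haffine).sub (strongConvexOn_half_inner_map_self hC)
  rwa [zero_add] at h

theorem bddBelow_Lag_image {α : ℝ} (hα : 0 < α) (hA : ∀ V, α * ‖V‖ ^ 2 ≤ ⟪A V, V⟫)
    (K : Set (EuclideanSpace ℝ (Fin m))) (W : EuclideanSpace ℝ (Fin n)) :
    BddBelow ((fun V => Lag A B C F G V W) '' K) := by
  refine ⟨-(‖F - B.adjoint W‖ ^ 2 / (2 * α)) - (⟪G, W⟫ + (1 / 2 : ℝ) * ⟪C W, W⟫), ?_⟩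
  rintro _ ⟨V, -, rfl⟩
  dsimp only
  rw [Lag_eq_half_inner_map_self_sub]
  linarith [neg_sq_div_le_half_inner_map_self_sub_inner hα hA (F - B.adjoint W) V]

variable {A B C F G} {K : Set (EuclideanSpace ℝ (Fin m))}

theorem strongConvexOn_dualFunctional {μ : ℝ} (hC : ∀ W, μ * ‖W‖ ^ 2 ≤ ⟪C W, W⟫)
    (hK : K.Nonempty) (hbdd : ∀ W, BddBelow ((fun V => Lag A B C F G V W) '' K)) :
    StrongConvexOn univ μ (dualFunctional A B C F G K) :=
  (UniformConcaveOn.csInf_image hK (fun W _ => hbdd W)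
    fun V _ => strongConcaveOn_Lag A B C F G hC V).neg

theorem tendsto_dualFunctional_cocompact {μ : ℝ} (hμ : 0 < μ)
    (hC : ∀ W, μ * ‖W‖ ^ 2 ≤ ⟪C W, W⟫) (hK : K.Nonempty)
    (hbdd : ∀ W, BddBelow ((fun V => Lag A B C F G V W) '' K)) :
    Tendsto (dualFunctional A B C F G K) (cocompact _) atTop := by
  obtain ⟨V₀, hV₀⟩ := hK
  have hle : ∀ W, -Lag A B C F G V₀ W ≤ dualFunctional A B C F G K W :=
    fun W => neg_le_neg (csInf_le (hbdd W) ⟨V₀, hV₀, rfl⟩)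
  refine tendsto_atTop_mono hle ((tendsto_atTop_add_const_right _
    (-((1 / 2 : ℝ) * ⟪A V₀, V₀⟫ - ⟪F, V₀⟫))
    (tendsto_half_inner_map_self_sub_inner_cocompact hμ hC (B V₀ - G))).congr fun W => ?_)
  rw [Lag]
  ring

end Lagrangian

theorem stmt_5_general {m n : ℕ}
    (A : EuclideanSpace ℝ (Fin m) →L[ℝ] EuclideanSpace ℝ (Fin m))
    (hApos : ∀ x : EuclideanSpace ℝ (Fin m), x ≠ 0 → 0 < ⟪A x, x⟫)
    (B : EuclideanSpace ℝ (Fin m) →L[ℝ] EuclideanSpace ℝ (Fin n))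
    (C : EuclideanSpace ℝ (Fin n) →L[ℝ] EuclideanSpace ℝ (Fin n))
    (μ : ℝ) (hμ : 0 < μ)
    (hCcoer : ∀ W : EuclideanSpace ℝ (Fin n), μ * ‖W‖ ^ 2 ≤ ⟪C W, W⟫)
    (F : EuclideanSpace ℝ (Fin m)) (G : EuclideanSpace ℝ (Fin n))
    (K : Set (EuclideanSpace ℝ (Fin m)))
    (hKne : K.Nonempty) :
    ConvexOn ℝ Set.univ
        (fun W : EuclideanSpace ℝ (Fin n) =>
          dualFunctional A B C F G K W - μ / 2 * ‖W‖ ^ 2) ∧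
      ∃! Θ : EuclideanSpace ℝ (Fin n),
        ∀ W : EuclideanSpace ℝ (Fin n),
          dualFunctional A B C F G K Θ ≤ dualFunctional A B C F G K W := by
  obtain ⟨α, hα, hA⟩ := exists_pos_mul_norm_sq_le_inner_map_self hApos
  have hbdd := bddBelow_Lag_image A B C F G hα hA K
  have hstrong := strongConvexOn_dualFunctional hCcoer hKne hbdd
  exact ⟨strongConvexOn_iff_convex.1 hstrong, hstrong.existsUnique_forall_le hμ
    (tendsto_dualFunctional_cocompact hμ hCcoer hKne hbdd)⟩

/-- The dual functional `h` is strongly convex with modulus `μ`,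
the smallest eigenvalue of `C` (i.e. `W ↦ h(W) − (μ/2)‖W‖²` is convex);
in particular `h` has a unique global minimizer. -/
theorem stmt_5 {m n : ℕ} (hm : 0 < m) (hn : 0 < n)
    (A : EuclideanSpace ℝ (Fin m) →L[ℝ] EuclideanSpace ℝ (Fin m))
    (hAsym : ∀ x y : EuclideanSpace ℝ (Fin m), ⟪A x, y⟫ = ⟪x, A y⟫)
    (hApos : ∀ x : EuclideanSpace ℝ (Fin m), x ≠ 0 → 0 < ⟪A x, x⟫)
    (B : EuclideanSpace ℝ (Fin m) →L[ℝ] EuclideanSpace ℝ (Fin n))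
    (C : EuclideanSpace ℝ (Fin n) →L[ℝ] EuclideanSpace ℝ (Fin n))
    (hCsym : ∀ x y : EuclideanSpace ℝ (Fin n), ⟪C x, y⟫ = ⟪x, C y⟫)
    (μ : ℝ) (hμ : 0 < μ)
    (hCcoer : ∀ W : EuclideanSpace ℝ (Fin n), μ * ‖W‖ ^ 2 ≤ ⟪C W, W⟫)
    (F : EuclideanSpace ℝ (Fin m)) (G : EuclideanSpace ℝ (Fin n))
    (K : Set (EuclideanSpace ℝ (Fin m)))
    (hKne : K.Nonempty) (hKcl : IsClosed K) (hKco : Convex ℝ K) :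
    ConvexOn ℝ Set.univ
        (fun W : EuclideanSpace ℝ (Fin n) =>
          dualFunctional A B C F G K W - μ / 2 * ‖W‖ ^ 2) ∧
      ∃! Θ : EuclideanSpace ℝ (Fin n),
        ∀ W : EuclideanSpace ℝ (Fin n),
          dualFunctional A B C F G K Θ ≤ dualFunctional A B C F G K W :=
  stmt_5_general A hApos B C μ hμ hCcoer F G K hKne
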